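/- Let ρ and σ be density operators, and let k, m ≥ 0. Define E_d^m(ρ‖σ), Ẽ_d^m(ρ‖σ), E_c^k(ρ‖σ), Ẽ_c^k(ρ‖σ) via 2^{−Ẽ_d^m} = sup{Tr[Λρ] : 0 ≤ Λ ≤ I, Tr[Λσ] ≤ 2^{−m}}, 2^{−E_d^m} = 1 − 2^{−Ẽ_d^m}, 2^{−E_c^k} = inf{(1/2)‖ρ̃ − ρ‖₁ : ρ̃ density op., ρ̃ ≤ 2^k σ}, 2^{−Ẽ_c^k} = 1 − 2^{−E_c^k}. Then 2^{−Ẽ_d^m(ρ‖σ)} ≤ 2^{−E_c^k(ρ‖σ)} + 2^{k−m} and 2^{−Ẽ_c^k(ρ‖σ)} ≤ 2^{−E_d^m(ρ‖σ)} + 2^{k−m}. -/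

import Mathlib

open Matrix ComplexOrder

noncomputable def traceNorm {n : ℕ} (X : Matrix (Fin n) (Fin n) ℂ) : ℝ :=
  (((Matrix.posSemidef_conjTranspose_mul_self X).1.eigenvectorUnitary.1 *
    diagonal (((↑) : ℝ → ℂ) ∘ Real.sqrt ∘ (Matrix.posSemidef_conjTranspose_mul_self X).1.eigenvalues) *
    (star (Matrix.posSemidef_conjTranspose_mul_self X).1.eigenvectorUnitary :
      Matrix (Fin n) (Fin n) ℂ)).trace).re

noncomputable def mpow {n : ℕ} {A : Matrix (Fin n) (Fin n) ℂ} (hA : A.PosSemidef) (s : ℝ) :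
    Matrix (Fin n) (Fin n) ℂ :=
  hA.1.cfc (fun x => if x = 0 then 0 else x ^ s)

namespace Stmt15Aux

variable {n : ℕ}

lemma trace_re_nonneg {A : Matrix (Fin n) (Fin n) ℂ} (hA : A.PosSemidef) :
    0 ≤ (A.trace).re := by
  rw [Matrix.trace, Complex.re_sum]
  apply Finset.sum_nonneg
  intro i _
  rw [Matrix.diag_apply]
  have h := hA.dotProduct_mulVec_nonneg (Pi.single i 1)
  have hd : star (Pi.single i 1 : Fin n → ℂ) ⬝ᵥ (A *ᵥ Pi.single i 1) = A i i := by
    simp [dotProduct, mulVec, Pi.single_apply, Finset.sum_ite_eq]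
  rw [hd] at h
  exact (Complex.le_def.mp h).1

open scoped MatrixOrder in
lemma trace_mul_psd_nonneg {A B : Matrix (Fin n) (Fin n) ℂ}
    (hA : A.PosSemidef) (hB : B.PosSemidef) : 0 ≤ ((A * B).trace).re := by
  obtain ⟨C, hC⟩ : ∃ C : Matrix (Fin n) (Fin n) ℂ, A = Cᴴ * C :=
    CStarAlgebra.nonneg_iff_eq_star_mul_self.mp hA.nonneg
  obtain ⟨D, hD⟩ : ∃ D : Matrix (Fin n) (Fin n) ℂ, B = Dᴴ * D :=
    CStarAlgebra.nonneg_iff_eq_star_mul_self.mp hB.nonneg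
  have key : (A * B).trace = (((C * Dᴴ)ᴴ * (C * Dᴴ)).trace) := by
    rw [hC, hD, Matrix.conjTranspose_mul, Matrix.conjTranspose_conjTranspose]
    calc (Cᴴ * C * (Dᴴ * D)).trace = ((Cᴴ * C * Dᴴ) * D).trace := by
            simp only [Matrix.mul_assoc]
      _ = (D * (Cᴴ * C * Dᴴ)).trace := Matrix.trace_mul_comm _ _
      _ = (D * Cᴴ * (C * Dᴴ)).trace := by simp only [Matrix.mul_assoc]
  rw [key]
  exact trace_re_nonneg (Matrix.posSemidef_conjTranspose_mul_self _)

variable {A : Matrix (Fin n) (Fin n) ℂ} (hA : A.IsHermitian)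

lemma cfc_trace (f : ℝ → ℝ) : (hA.cfc f).trace = ∑ i, (f (hA.eigenvalues i) : ℂ) := by
  rw [Matrix.IsHermitian.cfc, Unitary.conjStarAlgAut_apply, Matrix.trace_mul_cycle,
    Unitary.star_mul_self_of_mem (SetLike.coe_mem _), one_mul, Matrix.trace_diagonal]
  rfl

lemma cfc_mul (f g : ℝ → ℝ) :
    hA.cfc f * hA.cfc g = hA.cfc (fun x => f x * g x) := by
  simp only [Matrix.IsHermitian.cfc, Unitary.conjStarAlgAut_apply]
  have h1 : star (hA.eigenvectorUnitary : Matrix (Fin n) (Fin n) ℂ) *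
      (hA.eigenvectorUnitary : Matrix (Fin n) (Fin n) ℂ) = 1 :=
    Unitary.star_mul_self_of_mem (SetLike.coe_mem _)
  calc (hA.eigenvectorUnitary : Matrix (Fin n) (Fin n) ℂ) *
        diagonal (RCLike.ofReal ∘ f ∘ hA.eigenvalues) *
        star (hA.eigenvectorUnitary : Matrix (Fin n) (Fin n) ℂ) *
        ((hA.eigenvectorUnitary : Matrix (Fin n) (Fin n) ℂ) *
        diagonal (RCLike.ofReal ∘ g ∘ hA.eigenvalues) *
        star (hA.eigenvectorUnitary : Matrix (Fin n) (Fin n) ℂ))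
      = (hA.eigenvectorUnitary : Matrix (Fin n) (Fin n) ℂ) *
        (diagonal (RCLike.ofReal ∘ f ∘ hA.eigenvalues) *
        diagonal (RCLike.ofReal ∘ g ∘ hA.eigenvalues)) *
        star (hA.eigenvectorUnitary : Matrix (Fin n) (Fin n) ℂ) := by
        simp only [Matrix.mul_assoc]
        rw [← Matrix.mul_assoc (star _) _ _, h1, one_mul]
    _ = _ := by
        rw [Matrix.diagonal_mul_diagonal]
        have hfun : (fun i => (RCLike.ofReal ∘ f ∘ hA.eigenvalues) i *
            (RCLike.ofReal ∘ g ∘ hA.eigenvalues) i) =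
            ((RCLike.ofReal ∘ (fun x => f x * g x) ∘ hA.eigenvalues) : Fin n → ℂ) := by
          ext i
          simp [Function.comp]
        rw [hfun]

lemma cfc_sub (f g : ℝ → ℝ) :
    hA.cfc f - hA.cfc g = hA.cfc (fun x => f x - g x) := by
  simp only [Matrix.IsHermitian.cfc, Unitary.conjStarAlgAut_apply]
  rw [← Matrix.sub_mul, ← Matrix.mul_sub, Matrix.diagonal_sub]
  have hfun : (fun i => (RCLike.ofReal ∘ f ∘ hA.eigenvalues) i - (RCLike.ofReal ∘ g ∘ hA.eigenvalues) i) =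
      ((RCLike.ofReal ∘ (fun x => f x - g x) ∘ hA.eigenvalues) : Fin n → ℂ) := by
    ext i
    simp [Function.comp]
  rw [hfun]

lemma cfc_id' : hA.cfc (fun x => x) = A := by
  conv_rhs => rw [hA.spectral_theorem]
  rfl

lemma cfc_psd (f : ℝ → ℝ) (hf : ∀ x, 0 ≤ f x) : (hA.cfc f).PosSemidef := by
  rw [Matrix.IsHermitian.cfc, Unitary.conjStarAlgAut_apply, Matrix.star_eq_conjTranspose]
  apply Matrix.PosSemidef.mul_mul_conjTranspose_same
  rw [Matrix.posSemidef_diagonal_iff]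
  intro i
  simpa using Complex.zero_le_real.mpr (hf _)

lemma smul_psd {σ : Matrix (Fin n) (Fin n) ℂ} (hσ : σ.PosSemidef) {r : ℝ} (hr : 0 ≤ r) :
    (r • σ).PosSemidef := by
  constructor
  · show (r • σ)ᴴ = r • σ
    rw [Matrix.conjTranspose_smul, hσ.1.eq, star_trivial]
  · exact (hσ.smul hr).2

/-- The trace-distance inequality. -/
lemma key_td {Λ ρ ρt : Matrix (Fin n) (Fin n) ℂ} (hΛ : Λ.PosSemidef)
    (h1Λ : ((1:Matrix (Fin n) (Fin n) ℂ) - Λ).PosSemidef)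
    (hρ : ρ.PosSemidef) (hρt : ρt.PosSemidef) (htr : ρ.trace = ρt.trace) :
    ((Λ * ρ).trace).re ≤ ((Λ * ρt).trace).re + (1/2) * traceNorm (ρt - ρ) := by
  set Δ := ρt - ρ with hΔdef
  have hΔ : Δ.IsHermitian := hρt.1.sub hρ.1
  set g := hΔ.eigenvalues with hg
  set P := hΔ.cfc (fun x => max x 0) with hPdef
  set N := hΔ.cfc (fun x => max (-x) 0) with hNdef
  have hP : P.PosSemidef := cfc_psd hΔ _ (fun x => le_max_right _ _)
  have hN : N.PosSemidef := cfc_psd hΔ _ (fun x => le_max_right _ _)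
  have hPN : P - N = Δ := by
    rw [hPdef, hNdef, cfc_sub]
    simp only [max_zero_sub_max_neg_zero_eq_self]
    exact cfc_id' hΔ
  -- trace norm computation
  have habs : traceNorm Δ = ∑ i, |g i| := by
    have h1 : hΔ.cfc (fun x => |x|) = (Matrix.posSemidef_conjTranspose_mul_self Δ).1.cfc Real.sqrt := by
      have hsq : hΔ.cfc (fun x => x * x) = Δᴴ * Δ := by
        rw [← cfc_mul, cfc_id' hΔ, hΔ.eq]
      rw [← hΔ.cfc_eq, ← (Matrix.posSemidef_conjTranspose_mul_self Δ).1.cfc_eq, ← hsq, ← hΔ.cfc_eq,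
        ← cfc_comp Real.sqrt (fun x => x * x) Δ hΔ.isSelfAdjoint]
      congr 1
      funext x
      exact (Real.sqrt_mul_self_eq_abs x).symm
    rw [show traceNorm Δ = ((Matrix.posSemidef_conjTranspose_mul_self Δ).1.cfc Real.sqrt).trace.re
      from rfl, ← h1, cfc_trace]
    rw [← Complex.ofReal_sum]
    simp
    rfl
  have hsum0 : ∑ i, g i = 0 := by
    have h0 : Δ.trace = 0 := by
      rw [hΔdef, Matrix.trace_sub, htr, sub_self]
    have h1 : Δ.trace = ∑ i, (g i : ℂ) := by
      rw [← cfc_id' hΔ, cfc_trace]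
    rw [h0] at h1
    have := h1.symm
    rw [← Complex.ofReal_sum] at this
    exact_mod_cast this
  have hNtr : (N.trace).re = (1/2) * traceNorm Δ := by
    have h2 : (N.trace).re = ∑ i, max (-(g i)) 0 := by
      rw [hNdef, cfc_trace, ← Complex.ofReal_sum]
      simp
      rfl
    have h3 : (P.trace).re = ∑ i, max (g i) 0 := by
      rw [hPdef, cfc_trace, ← Complex.ofReal_sum]
      simp
      rfl
    have h4 : (∑ i, max (g i) 0) - (∑ i, max (-(g i)) 0) = 0 := by
      rw [← Finset.sum_sub_distrib]
      simp only [max_zero_sub_max_neg_zero_eq_self]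
      exact hsum0
    have h5 : (∑ i, max (g i) 0) + (∑ i, max (-(g i)) 0) = ∑ i, |g i| := by
      rw [← Finset.sum_add_distrib]
      apply Finset.sum_congr rfl
      intro i _
      rcases le_total 0 (g i) with h | h
      · rw [max_eq_left h, max_eq_right (neg_nonpos.mpr h), abs_of_nonneg h, add_zero]
      · rw [max_eq_right h, max_eq_left (neg_nonneg.mpr h), abs_of_nonpos h, zero_add]
    rw [h2, habs]
    linarith
  -- main chain
  have hρeq : ρt + N - P = ρ := by
    have : P - N = ρt - ρ := by rw [hPN]
    rw [sub_eq_iff_eq_add] at this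
    rw [this]; abel
  have e1 : (Λ * ρ).trace = (Λ * ρt).trace + (Λ * N).trace - (Λ * P).trace := by
    rw [← hρeq, Matrix.mul_sub, Matrix.mul_add, Matrix.trace_sub, Matrix.trace_add]
  have e2 : 0 ≤ ((Λ * P).trace).re := trace_mul_psd_nonneg hΛ hP
  have e3 : ((Λ * N).trace).re ≤ (N.trace).re := by
    have h := trace_mul_psd_nonneg h1Λ hN
    rw [Matrix.sub_mul, Matrix.one_mul, Matrix.trace_sub] at h
    rw [Complex.sub_re] at h
    linarith
  have e4 := congrArg Complex.re e1
  rw [Complex.sub_re, Complex.add_re] at e4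
  linarith

end Stmt15Aux

open Stmt15Aux

theorem stmt15 {n : ℕ} {ρ σ : Matrix (Fin n) (Fin n) ℂ}
    (hρ : ρ.PosSemidef) (hρ1 : ρ.trace = 1) (hσ : σ.PosSemidef) (hσ1 : σ.trace = 1)
    {k m : ℝ} (hk : 0 ≤ k) (hm : 0 ≤ m) :
    sSup {x : ℝ | ∃ Λ : Matrix (Fin n) (Fin n) ℂ, Λ.PosSemidef ∧ (1 - Λ).PosSemidef ∧
        ((Λ * σ).trace).re ≤ (2:ℝ) ^ (-m) ∧ x = ((Λ * ρ).trace).re} ≤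
      sInf {x : ℝ | ∃ ρt : Matrix (Fin n) (Fin n) ℂ, ρt.PosSemidef ∧ ρt.trace = 1 ∧
        ((2:ℝ) ^ k • σ - ρt).PosSemidef ∧ x = (1/2) * traceNorm (ρt - ρ)} + (2:ℝ) ^ (k - m) ∧
    1 - sInf {x : ℝ | ∃ ρt : Matrix (Fin n) (Fin n) ℂ, ρt.PosSemidef ∧ ρt.trace = 1 ∧
        ((2:ℝ) ^ k • σ - ρt).PosSemidef ∧ x = (1/2) * traceNorm (ρt - ρ)} ≤
      (1 - sSup {x : ℝ | ∃ Λ : Matrix (Fin n) (Fin n) ℂ, Λ.PosSemidef ∧ (1 - Λ).PosSemidef ∧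
        ((Λ * σ).trace).re ≤ (2:ℝ) ^ (-m) ∧ x = ((Λ * ρ).trace).re}) + (2:ℝ) ^ (k - m) := by
  set S := {x : ℝ | ∃ Λ : Matrix (Fin n) (Fin n) ℂ, Λ.PosSemidef ∧ (1 - Λ).PosSemidef ∧
      ((Λ * σ).trace).re ≤ (2:ℝ) ^ (-m) ∧ x = ((Λ * ρ).trace).re} with hSdef
  set T := {x : ℝ | ∃ ρt : Matrix (Fin n) (Fin n) ℂ, ρt.PosSemidef ∧ ρt.trace = 1 ∧
      ((2:ℝ) ^ k • σ - ρt).PosSemidef ∧ x = (1/2) * traceNorm (ρt - ρ)} with hTdef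
  have hS0 : (0:ℝ) ∈ S := by
    refine ⟨0, Matrix.PosSemidef.zero, ?_, ?_, ?_⟩
    · rw [sub_zero]; exact Matrix.PosSemidef.one
    · rw [Matrix.zero_mul, Matrix.trace_zero, Complex.zero_re]
      positivity
    · rw [Matrix.zero_mul, Matrix.trace_zero, Complex.zero_re]
  have hT0 : ((1/2) * traceNorm (σ - ρ)) ∈ T := by
    refine ⟨σ, hσ, hσ1, ?_, rfl⟩
    have h1 : (2:ℝ) ^ k • σ - σ = ((2:ℝ) ^ k - 1) • σ := by
      rw [sub_smul, one_smul]
    rw [h1]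
    apply smul_psd hσ
    have : (1:ℝ) ≤ (2:ℝ) ^ k := Real.one_le_rpow (by norm_num) hk
    linarith
  have key : ∀ x ∈ S, ∀ y ∈ T, x ≤ y + (2:ℝ) ^ (k - m) := by
    rintro x ⟨Λ, hΛ, h1Λ, hΛσ, rfl⟩ y ⟨ρt, hρt, hρt1, hle, rfl⟩
    have h1 := key_td hΛ h1Λ hρ hρt (hρ1.trans hρt1.symm)
    have h2 : ((Λ * ρt).trace).re ≤ (2:ℝ) ^ k * ((Λ * σ).trace).re := by
      have h := trace_mul_psd_nonneg hΛ hle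
      rw [Matrix.mul_sub, Matrix.trace_sub, Complex.sub_re] at h
      have he : ((Λ * ((2:ℝ) ^ k • σ)).trace).re = (2:ℝ) ^ k * ((Λ * σ).trace).re := by
        rw [mul_smul_comm, Matrix.trace_smul]
        simp [Complex.real_smul]
      linarith
    have h3 : (2:ℝ) ^ k * ((Λ * σ).trace).re ≤ (2:ℝ) ^ (k - m) := by
      have : (2:ℝ) ^ (k - m) = (2:ℝ) ^ k * (2:ℝ) ^ (-m) := by
        rw [sub_eq_add_neg, Real.rpow_add (by norm_num)]
      rw [this]
      apply mul_le_mul_of_nonneg_left hΛσ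
      positivity
    linarith
  have hub : ∀ y ∈ T, sSup S ≤ y + (2:ℝ) ^ (k - m) :=
    fun y hy => csSup_le ⟨0, hS0⟩ (fun x hx => key x hx y hy)
  have h4 : sSup S ≤ sInf T + (2:ℝ) ^ (k - m) := by
    have h5 : sSup S - (2:ℝ) ^ (k - m) ≤ sInf T :=
      le_csInf ⟨_, hT0⟩ (fun y hy => by linarith [hub y hy])
    linarith
  exact ⟨h4, by linarith⟩
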